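/- For n divisible by 4, the lattice D_n⁺ is self-dual: D_n⁺ = (D_n⁺)* where (D_n⁺)* = {y ∈ ℝⁿ : ⟨x,y⟩ ∈ ℤ for all x ∈ D_n⁺}. -/

import Mathlib

/-- The checkerboard lattice `Dₙ` viewed inside `ℝⁿ`. -/
def Dlat (m : ℕ) : Set (Fin m → ℝ) :=
  {x | ∃ z : Fin m → ℤ, (∀ i, x i = (z i : ℝ)) ∧ 2 ∣ ∑ i, z i}

/-- `Dₙ⁺ = Dₙ ∪ (Dₙ + (1/2,…,1/2))`. -/
def DlatPlus (m : ℕ) : Set (Fin m → ℝ) :=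
  Dlat m ∪ (((fun _ => (1:ℝ)/2) + ·) '' Dlat m)

/-- The dual (reciprocal) lattice of a set, via integrality of inner products. -/
def dualSet (m : ℕ) (S : Set (Fin m → ℝ)) : Set (Fin m → ℝ) :=
  {y | ∀ x ∈ S, ∃ k : ℤ, ∑ i, x i * y i = (k : ℝ)}

/-!
Every `y` in the dual pairs integrally with `eᵢ + eⱼ ∈ Dₙ`, so `yᵢ + yⱼ ∈ ℤ` for all `i, j`
(including `i = j`); hence `y` lies in `ℤⁿ` or in `ℤⁿ + v`. Pairing with `v ∈ Dₙ⁺` makes `∑ yᵢ`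
even, which puts the integer part of `y` in `Dₙ` once `4 ∣ n`. Conversely, writing
`x = z + (e/2)𝟙` and `y = w + (f/2)𝟙` with `z, w ∈ Dₙ`, the pairing is
`⟨z, w⟩ + (e/2)∑wᵢ + (f/2)∑zᵢ + n·ef/4`, an integer since `∑zᵢ, ∑wᵢ` are even and `4 ∣ n`.
-/

open Finset

lemma sum_add_mul_add {ι : Type*} [Fintype ι] (z w : ι → ℝ) (a b : ℝ) :
    ∑ i, (z i + a) * (w i + b)
      = ∑ i, z i * w i + a * ∑ i, w i + b * ∑ i, z i + Fintype.card ι * (a * b) := by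
  simp only [add_mul, mul_add, sum_add_distrib, ← mul_sum, ← sum_mul, sum_const, card_univ,
    nsmul_eq_mul]
  ring

lemma sum_single_add_single_mul {ι : Type*} [Fintype ι] [DecidableEq ι] (i j : ι) (y : ι → ℝ) :
    ∑ t, (Pi.single i 1 + Pi.single j 1 : ι → ℝ) t * y t = y i + y j := by
  simp [add_mul, sum_add_distrib, Pi.single_apply]

lemma int_or_half_int_of_forall_add_int {ι : Type*} {y : ι → ℝ}
    (h : ∀ i j, ∃ k : ℤ, y i + y j = k) :
    (∃ w : ι → ℤ, ∀ i, y i = w i) ∨ ∃ w : ι → ℤ, ∀ i, y i = w i + 1 / 2 := by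
  by_cases hint : ∀ i, ∃ k : ℤ, y i = k
  · choose w hw using hint
    exact Or.inl ⟨w, hw⟩
  push Not at hint
  obtain ⟨i₀, hi₀⟩ := hint
  obtain ⟨k, hk⟩ := h i₀ i₀
  obtain ⟨q, rfl | rfl⟩ := Int.even_or_odd' k
  · exact absurd (by push_cast at hk; linarith) (hi₀ q)
  · choose c hc using fun i => h i i₀
    refine Or.inr ⟨fun i => c i - q - 1, fun i => ?_⟩
    push_cast at hk ⊢
    linarith [hc i]

section

variable {m : ℕ}

lemma zero_mem_Dlat : (0 : Fin m → ℝ) ∈ Dlat m :=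
  ⟨0, by simp, by simp⟩

lemma intCast_mem_Dlat {w : Fin m → ℤ} {k : ℤ} (h : ∑ i, (w i : ℝ) = 2 * k) :
    (fun i => (w i : ℝ)) ∈ Dlat m :=
  ⟨w, fun _ => rfl, k, by exact_mod_cast h⟩

lemma single_add_single_mem_Dlat (i j : Fin m) : Pi.single i (1 : ℝ) + Pi.single j 1 ∈ Dlat m :=
  ⟨Pi.single i 1 + Pi.single j 1, fun t => by simp [Pi.single_apply],
    ⟨1, by simp [sum_add_distrib]⟩⟩

lemma exists_int_add_half_of_mem_DlatPlus {x : Fin m → ℝ} (hx : x ∈ DlatPlus m) :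
    ∃ (z : Fin m → ℤ) (e : ℤ), (∀ i, x i = z i + e / 2) ∧ 2 ∣ ∑ i, z i := by
  rcases hx with ⟨z, hz, hs⟩ | ⟨x', ⟨z, hz, hs⟩, rfl⟩
  · exact ⟨z, 0, fun i => by simp [hz i], hs⟩
  · exact ⟨z, 1, fun i => by simp [hz i, add_comm], hs⟩

lemma DlatPlus_subset_dualSet (hm : 4 ∣ m) : DlatPlus m ⊆ dualSet m (DlatPlus m) := by
  intro y hy x hx
  obtain ⟨q, rfl⟩ := hm
  obtain ⟨z, e, hz, s, hs⟩ := exists_int_add_half_of_mem_DlatPlus hx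
  obtain ⟨w, f, hw, t, ht⟩ := exists_int_add_half_of_mem_DlatPlus hy
  refine ⟨∑ i, z i * w i + e * t + f * s + q * e * f, ?_⟩
  have hzs : ∑ i, (z i : ℝ) = 2 * s := by exact_mod_cast hs
  have hwt : ∑ i, (w i : ℝ) = 2 * t := by exact_mod_cast ht
  simp only [hz, hw, sum_add_mul_add, hzs, hwt, Fintype.card_fin]
  push_cast
  ring

lemma mem_DlatPlus_of_mem_dualSet (hm : 4 ∣ m) {y : Fin m → ℝ}
    (hy : y ∈ dualSet m (DlatPlus m)) : y ∈ DlatPlus m := by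
  have hpair : ∀ i j, ∃ k : ℤ, y i + y j = k := fun i j => by
    simpa only [sum_single_add_single_mul] using hy _ (Or.inl (single_add_single_mem_Dlat i j))
  obtain ⟨k, hk⟩ : ∃ k : ℤ, ∑ i, y i = 2 * k := by
    obtain ⟨k, hk⟩ := hy _ (Or.inr ⟨0, zero_mem_Dlat, add_zero _⟩)
    refine ⟨k, ?_⟩
    rw [← mul_sum] at hk
    linarith
  obtain ⟨q, rfl⟩ := hm
  rcases int_or_half_int_of_forall_add_int hpair with ⟨w, hw⟩ | ⟨w, hw⟩
  · obtain rfl : y = fun i => (w i : ℝ) := funext hw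
    exact Or.inl (intCast_mem_Dlat hk)
  · refine Or.inr ⟨fun i => (w i : ℝ), intCast_mem_Dlat (k := k - q) ?_,
      funext fun i => by simp [hw, add_comm]⟩
    simp only [hw, sum_add_distrib, sum_const, card_univ, Fintype.card_fin, nsmul_eq_mul] at hk
    push_cast at hk ⊢
    linarith

end

/-- For `n` divisible by 4, the lattice `Dₙ⁺` is self-dual. -/
theorem DnPlus_self_dual (n : ℕ) (hn : 4 ∣ n) :
    dualSet n (DlatPlus n) = DlatPlus n :=
  Set.Subset.antisymm (fun _ => mem_DlatPlus_of_mem_dualSet hn) (DlatPlus_subset_dualSet hn)
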